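/- Let (s_k)_{k≥1} be i.i.d. bounded real-valued random variables with E[s_1] < 0, and suppose there exists r > 0 with E[exp(r·s_1)] = 1. Then for any threshold h > 0 the one-sided CUSUM alarm time satisfies E[T_h] ≥ exp(r·h). -/

import Mathlib

open MeasureTheory ProbabilityTheory
open scoped ENNReal

/-- One-sided CUSUM statistic with step sequence `x` (where `x k` is the `(k+1)`-st
step `s_{k+1}`): `g_0 = 0`, `g_{k+1} = max (0, g_k + s_{k+1})`. -/
def gCusum (x : ℕ → ℝ) : ℕ → ℝ
  | 0 => 0
  | k + 1 => max 0 (gCusum x k + x k)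

/-- One-sided CUSUM alarm time `T_h = inf {k ≥ 1 : g_k ≥ h}`, valued in `ℝ≥0∞`
(`⊤` if the threshold is never reached). -/
noncomputable def oneSidedAlarm (h : ℝ) (x : ℕ → ℝ) : ℝ≥0∞ :=
  sInf ((fun n : ℕ => (n : ℝ≥0∞)) '' {k : ℕ | 1 ≤ k ∧ h ≤ gCusum x k})

/-!
Let `G n` be the CUSUM statistic frozen as soon as it reaches `h`; it agrees with `g n` up to
the alarm. Before the alarm and outside resets,
`exp (r * G (n + 1)) = exp (r * G n) * exp (r * s n)` with `s n` independent of `G n` and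
`E[exp (r * s n)] ≤ 1`, while a reset to `0` adds at most `1`. Hence
`E[exp (r * G n)] ≤ 1 + E[#resets before n]`. On the other hand `exp (r * G n)` is at least
`exp (r * h)` on the alarm event `A n = {h ≤ G n}` and at least `1` elsewhere, and the resets
together with the alarm step are distinct steps taken before the alarm, so
`#resets + 1_{A n} ≤ T_h`. Together these give `exp (r * h) * P(A n) ≤ E[T_h]`. Letting
`n → ∞` concludes, unless the alarm fails to sound with positive probability, in which case
`E[T_h] = ∞`.
-/

open Finset

noncomputable def stoppedCusum (h : ℝ) (x : ℕ → ℝ) : ℕ → ℝ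
  | 0 => 0
  | n + 1 =>
    if h ≤ stoppedCusum h x n then stoppedCusum h x n else max 0 (stoppedCusum h x n + x n)

lemma stoppedCusum_succ_of_le {h : ℝ} {x : ℕ → ℝ} {n : ℕ} (hn : h ≤ stoppedCusum h x n) :
    stoppedCusum h x (n + 1) = stoppedCusum h x n := by
  simp [stoppedCusum, hn]

lemma stoppedCusum_succ_of_lt {h : ℝ} {x : ℕ → ℝ} {n : ℕ} (hn : stoppedCusum h x n < h) :
    stoppedCusum h x (n + 1) = max 0 (stoppedCusum h x n + x n) := by
  simp [stoppedCusum, hn.not_ge]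

lemma stoppedCusum_nonneg (h : ℝ) (x : ℕ → ℝ) (n : ℕ) : 0 ≤ stoppedCusum h x n := by
  induction n with
  | zero => rfl
  | succ n ih =>
    rcases le_or_gt h (stoppedCusum h x n) with hn | hn
    · rwa [stoppedCusum_succ_of_le hn]
    · rw [stoppedCusum_succ_of_lt hn]
      exact le_max_left _ _

lemma le_stoppedCusum_of_le {h : ℝ} {x : ℕ → ℝ} {m n : ℕ} (hmn : m ≤ n)
    (hm : h ≤ stoppedCusum h x m) :
    h ≤ stoppedCusum h x n := by
  induction n, hmn using Nat.le_induction with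
  | base => exact hm
  | succ n _ ih => rwa [stoppedCusum_succ_of_le ih]

lemma gCusum_eq_stoppedCusum {h : ℝ} {x : ℕ → ℝ} {n : ℕ} (hn : stoppedCusum h x n < h) :
    gCusum x n = stoppedCusum h x n := by
  induction n with
  | zero => rfl
  | succ n ih =>
    have hlt : stoppedCusum h x n < h := by
      by_contra hle
      rw [stoppedCusum_succ_of_le (not_lt.1 hle)] at hn
      exact hle hn
    rw [stoppedCusum_succ_of_lt hlt, gCusum, ih hlt]

lemma dependsOn_stoppedCusum (h : ℝ) (n : ℕ) :
    DependsOn (fun x => stoppedCusum h x n) (range n : Set ℕ) := by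
  induction n with
  | zero => exact fun _ _ _ => rfl
  | succ n ih =>
    intro x y hxy
    have hn : stoppedCusum h x n = stoppedCusum h y n :=
      ih fun k hk => hxy k (by simp at hk ⊢; omega)
    simp only [stoppedCusum, hn, hxy n (by simp)]

lemma measurable_stoppedCusum (h : ℝ) (n : ℕ) : Measurable fun x => stoppedCusum h x n := by
  induction n with
  | zero => exact measurable_const
  | succ n ih =>
    exact Measurable.ite (measurableSet_le measurable_const ih) ih
      (measurable_const.max (ih.add (measurable_pi_apply n)))

noncomputable def resetCount (h : ℝ) (x : ℕ → ℝ) (n : ℕ) : ℕ :=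
  #{k ∈ range n | stoppedCusum h x k < h ∧ stoppedCusum h x k + x k ≤ 0}

noncomputable def aliveCount (h : ℝ) (x : ℕ → ℝ) (n : ℕ) : ℕ :=
  #{k ∈ range n | stoppedCusum h x k < h}

lemma resetCount_succ (h : ℝ) (x : ℕ → ℝ) (n : ℕ) :
    resetCount h x (n + 1) = resetCount h x n +
      if stoppedCusum h x n < h ∧ stoppedCusum h x n + x n ≤ 0 then 1 else 0 := by
  simp only [resetCount, card_filter, sum_range_succ]

lemma resetCount_add_le_aliveCount {h : ℝ} (hh : 0 < h) (x : ℕ → ℝ) (n : ℕ) :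
    resetCount h x n + (if h ≤ stoppedCusum h x n then 1 else 0) ≤ aliveCount h x n := by
  induction n with
  | zero => simp [resetCount, aliveCount, stoppedCusum, hh.not_ge]
  | succ n ih =>
    rw [resetCount_succ, aliveCount, card_filter, sum_range_succ, ← card_filter, ← aliveCount]
    rcases le_or_gt h (stoppedCusum h x n) with hn | hn
    · simp only [stoppedCusum_succ_of_le hn, hn, hn.not_gt, if_true, false_and, if_false] at ih ⊢
      omega
    · simp only [stoppedCusum_succ_of_lt hn, hn, hn.not_ge, if_false, true_and] at ih ⊢
      by_cases hreset : stoppedCusum h x n + x n ≤ 0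
      · simp only [hreset, max_eq_left hreset, hh.not_ge, if_true, if_false]
        omega
      · simp only [hreset, if_false]
        split_ifs <;> omega

lemma aliveCount_le_oneSidedAlarm (h : ℝ) (x : ℕ → ℝ) (n : ℕ) :
    (aliveCount h x n : ℝ≥0∞) ≤ oneSidedAlarm h x := by
  refine le_sInf ?_
  rintro _ ⟨k, ⟨-, hk⟩, rfl⟩
  have hsub : {j ∈ range n | stoppedCusum h x j < h} ⊆ range k := by
    intro j hj
    simp only [mem_filter, mem_range] at hj ⊢
    by_contra hkj
    have hkG : h ≤ stoppedCusum h x k := by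
      by_contra hlt
      exact hlt (gCusum_eq_stoppedCusum (not_le.1 hlt) ▸ hk)
    exact (le_stoppedCusum_of_le (not_lt.1 hkj) hkG).not_gt hj.2
  exact Nat.cast_le.2 ((card_le_card hsub).trans (card_range k).le)

lemma oneSidedAlarm_eq_top {h : ℝ} {x : ℕ → ℝ} (H : ∀ n, stoppedCusum h x n < h) :
    oneSidedAlarm h x = ⊤ := by
  have : {k : ℕ | 1 ≤ k ∧ h ≤ gCusum x k} = ∅ := by
    ext k
    simp [gCusum_eq_stoppedCusum (H k), H k]
  simp [oneSidedAlarm, this]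

lemma ofReal_exp_stoppedCusum_succ_le (r : ℝ) (h : ℝ) (x : ℕ → ℝ) (n : ℕ) :
    ENNReal.ofReal (Real.exp (r * stoppedCusum h x (n + 1))) ≤
      (if h ≤ stoppedCusum h x n then ENNReal.ofReal (Real.exp (r * stoppedCusum h x n)) else 0)
      + (if stoppedCusum h x n < h then ENNReal.ofReal (Real.exp (r * stoppedCusum h x n))
          else 0) * ENNReal.ofReal (Real.exp (r * x n))
      + (if stoppedCusum h x n < h ∧ stoppedCusum h x n + x n ≤ 0 then 1 else 0) := by
  rcases le_or_gt h (stoppedCusum h x n) with hn | hn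
  · simp [stoppedCusum_succ_of_le hn, hn, hn.not_gt]
  · rw [stoppedCusum_succ_of_lt hn]
    simp only [hn, hn.not_ge, if_true, if_false, true_and, zero_add]
    split_ifs with hreset
    · simp [max_eq_left hreset]
    · rw [max_eq_right (not_le.1 hreset).le, ← ENNReal.ofReal_mul (Real.exp_nonneg _),
        ← Real.exp_add, ← mul_add]
      exact le_self_add

theorem ProbabilityTheory.iIndepFun.indepFun_comp_of_dependsOn {Ω ι β γ : Type*}
    [MeasurableSpace Ω] {μ : Measure Ω} [MeasurableSpace β] [MeasurableSpace γ]
    {s : ι → Ω → β} (hindep : iIndepFun s μ) (hmeas : ∀ i, Measurable (s i))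
    {S : Finset ι} {j : ι} (hj : j ∉ S) {f : (ι → β) → γ} (hf : Measurable f)
    (hdep : DependsOn f S) :
    IndepFun (fun ω => f fun i => s i ω) (s j) μ := by
  classical
  have := hindep.isProbabilityMeasure
  obtain ⟨ω₀⟩ := nonempty_of_isProbabilityMeasure μ
  have hfactor : (fun ω => f fun i => s i ω) =
      (fun v => f (Function.updateFinset (fun i => s i ω₀) S v)) ∘ fun ω (i : S) => s i ω := by
    funext ω
    exact hdep fun i hi => by simp [Function.updateFinset, mem_coe.1 hi]
  rw [hfactor]
  exact (hindep.indepFun_finset S {j} (disjoint_singleton_right.2 hj) hmeas).comp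
    (hf.comp measurable_updateFinset) (measurable_pi_apply ⟨j, mem_singleton_self j⟩)

section

variable {Ω : Type*} [MeasurableSpace Ω] {μ : Measure Ω} {s : ℕ → Ω → ℝ} {r h : ℝ}

lemma measurable_stoppedCusum_comp (hmeas : ∀ k, Measurable (s k)) (n : ℕ) :
    Measurable fun ω => stoppedCusum h (fun k => s k ω) n :=
  (measurable_stoppedCusum h n).comp (measurable_pi_lambda _ hmeas)

lemma indepFun_exp_stoppedCusum_exp_step (hmeas : ∀ k, Measurable (s k)) (hindep : iIndepFun s μ)
    (n : ℕ) :
    IndepFun (fun ω => if stoppedCusum h (fun k => s k ω) n < h then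
        ENNReal.ofReal (Real.exp (r * stoppedCusum h (fun k => s k ω) n)) else 0)
      (fun ω => ENNReal.ofReal (Real.exp (r * s n ω))) μ := by
  refine (hindep.indepFun_comp_of_dependsOn hmeas (S := range n) notMem_range_self
    (f := fun x => if stoppedCusum h x n < h then
      ENNReal.ofReal (Real.exp (r * stoppedCusum h x n)) else 0) ?_ ?_).comp
    measurable_id (ψ := fun t => ENNReal.ofReal (Real.exp (r * t)))
      (measurable_id.const_mul r).exp.ennreal_ofReal
  · exact Measurable.ite (measurableSet_lt (measurable_stoppedCusum h n) measurable_const)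
      ((measurable_stoppedCusum h n).const_mul r).exp.ennreal_ofReal measurable_const
  · intro x y hxy
    simp only [dependsOn_stoppedCusum h n hxy]

lemma lintegral_exp_stoppedCusum_succ_le (hmeas : ∀ k, Measurable (s k))
    (hindep : iIndepFun s μ) (hexp : ∀ k, ∫⁻ ω, ENNReal.ofReal (Real.exp (r * s k ω)) ∂μ ≤ 1)
    (n : ℕ) :
    ∫⁻ ω, ENNReal.ofReal (Real.exp (r * stoppedCusum h (fun k => s k ω) (n + 1))) ∂μ ≤
      ∫⁻ ω, ENNReal.ofReal (Real.exp (r * stoppedCusum h (fun k => s k ω) n)) ∂μ +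
      ∫⁻ ω, (if stoppedCusum h (fun k => s k ω) n < h ∧
        stoppedCusum h (fun k => s k ω) n + s n ω ≤ 0 then 1 else 0) ∂μ := by
  set G := fun ω => stoppedCusum h (fun k => s k ω) n
  set M := fun ω => ENNReal.ofReal (Real.exp (r * G ω))
  set E := fun ω => ENNReal.ofReal (Real.exp (r * s n ω))
  set c : Ω → ℝ≥0∞ := fun ω => if G ω < h ∧ G ω + s n ω ≤ 0 then 1 else 0
  have hG : Measurable G := measurable_stoppedCusum_comp hmeas n
  have hM : Measurable M := by fun_prop
  have hE : Measurable E := by fun_prop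
  have hMalarm : Measurable fun ω => if h ≤ G ω then M ω else 0 :=
    Measurable.ite (measurableSet_le measurable_const hG) hM measurable_const
  have hMalive : Measurable fun ω => if G ω < h then M ω else 0 :=
    Measurable.ite (measurableSet_lt hG measurable_const) hM measurable_const
  calc ∫⁻ ω, ENNReal.ofReal (Real.exp (r * stoppedCusum h (fun k => s k ω) (n + 1))) ∂μ
      ≤ ∫⁻ ω, ((if h ≤ G ω then M ω else 0) + (if G ω < h then M ω else 0) * E ω + c ω) ∂μ :=
        lintegral_mono fun ω => ofReal_exp_stoppedCusum_succ_le r h _ n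
    _ = ∫⁻ ω, (if h ≤ G ω then M ω else 0) ∂μ +
          (∫⁻ ω, (if G ω < h then M ω else 0) ∂μ) * ∫⁻ ω, E ω ∂μ + ∫⁻ ω, c ω ∂μ := by
        rw [lintegral_add_left (f := fun ω => (if h ≤ G ω then M ω else 0) +
            (if G ω < h then M ω else 0) * E ω) (hMalarm.add (hMalive.mul hE)),
          lintegral_add_left hMalarm,
          lintegral_mul_eq_lintegral_mul_lintegral_of_indepFun'' hMalive.aemeasurable
            hE.aemeasurable (indepFun_exp_stoppedCusum_exp_step hmeas hindep n)]
    _ ≤ ∫⁻ ω, (if h ≤ G ω then M ω else 0) ∂μ +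
          ∫⁻ ω, (if G ω < h then M ω else 0) ∂μ + ∫⁻ ω, c ω ∂μ := by
        gcongr
        exact mul_le_of_le_one_right' (hexp n)
    _ = ∫⁻ ω, M ω ∂μ + ∫⁻ ω, c ω ∂μ := by
        rw [← lintegral_add_left hMalarm]
        congr 2 with ω
        by_cases hlt : G ω < h
        · simp [hlt, hlt.not_ge]
        · simp [hlt, not_lt.1 hlt]

theorem lintegral_exp_stoppedCusum_le (hmeas : ∀ k, Measurable (s k)) (hindep : iIndepFun s μ)
    (hexp : ∀ k, ∫⁻ ω, ENNReal.ofReal (Real.exp (r * s k ω)) ∂μ ≤ 1) (n : ℕ) :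
    ∫⁻ ω, ENNReal.ofReal (Real.exp (r * stoppedCusum h (fun k => s k ω) n)) ∂μ ≤
      1 + ∫⁻ ω, (resetCount h (fun k => s k ω) n : ℝ≥0∞) ∂μ := by
  have := hindep.isProbabilityMeasure
  induction n with
  | zero => simp [stoppedCusum, resetCount]
  | succ n ih =>
    refine (lintegral_exp_stoppedCusum_succ_le hmeas hindep hexp n).trans ?_
    calc _ ≤ 1 + (∫⁻ ω, (resetCount h (fun k => s k ω) n : ℝ≥0∞) ∂μ +
          ∫⁻ ω, (if stoppedCusum h (fun k => s k ω) n < h ∧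
            stoppedCusum h (fun k => s k ω) n + s n ω ≤ 0 then 1 else 0) ∂μ) := by
          rw [← add_assoc]
          gcongr
      _ ≤ 1 + ∫⁻ ω, (resetCount h (fun k => s k ω) (n + 1) : ℝ≥0∞) ∂μ := by
          grw [le_lintegral_add]
          simp [resetCount_succ]

theorem ofReal_exp_mul_measure_le_lintegral_oneSidedAlarm (hmeas : ∀ k, Measurable (s k))
    (hindep : iIndepFun s μ) (hexp : ∀ k, ∫⁻ ω, ENNReal.ofReal (Real.exp (r * s k ω)) ∂μ ≤ 1)
    (hr : 0 ≤ r) (hh : 0 < h) (n : ℕ) :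
    ENNReal.ofReal (Real.exp (r * h)) * μ {ω | h ≤ stoppedCusum h (fun k => s k ω) n} ≤
      ∫⁻ ω, oneSidedAlarm h (fun k => s k ω) ∂μ := by
  have := hindep.isProbabilityMeasure
  set G := fun ω => stoppedCusum h (fun k => s k ω) n
  set M := fun ω => ENNReal.ofReal (Real.exp (r * G ω))
  set A := {ω | h ≤ G ω}
  have hG : Measurable G := measurable_stoppedCusum_comp hmeas n
  have hA : MeasurableSet A := measurableSet_le measurable_const hG
  have hM : Measurable M := by fun_prop
  have hMlow : ENNReal.ofReal (Real.exp (r * h)) * μ A + μ Aᶜ ≤ ∫⁻ ω, M ω ∂μ := by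
    rw [← lintegral_add_compl M hA, ← setLIntegral_const, ← setLIntegral_one]
    refine add_le_add (setLIntegral_mono hM fun ω hω => ?_) (setLIntegral_mono hM fun ω _ => ?_)
    · exact ENNReal.ofReal_le_ofReal (Real.exp_le_exp.2 (mul_le_mul_of_nonneg_left hω hr))
    · exact ENNReal.one_le_ofReal.2 (Real.one_le_exp (mul_nonneg hr (stoppedCusum_nonneg ..)))
  have hcount : ∫⁻ ω, (resetCount h (fun k => s k ω) n : ℝ≥0∞) ∂μ + μ A ≤
      ∫⁻ ω, oneSidedAlarm h (fun k => s k ω) ∂μ := by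
    rw [← lintegral_indicator_one hA, ← lintegral_add_right _ (measurable_one.indicator hA)]
    refine lintegral_mono fun ω => le_trans ?_ (aliveCount_le_oneSidedAlarm h _ n)
    have := resetCount_add_le_aliveCount hh (fun k => s k ω) n
    simp only [Set.indicator_apply, A, G, Pi.one_apply]
    exact_mod_cast this
  refine ENNReal.le_of_add_le_add_right ENNReal.one_ne_top ?_
  calc ENNReal.ofReal (Real.exp (r * h)) * μ A + 1
      = ENNReal.ofReal (Real.exp (r * h)) * μ A + μ Aᶜ + μ A := by
        rw [add_assoc, add_comm (μ Aᶜ), prob_add_prob_compl hA]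
    _ ≤ 1 + ∫⁻ ω, (resetCount h (fun k => s k ω) n : ℝ≥0∞) ∂μ + μ A :=
        add_le_add (hMlow.trans (lintegral_exp_stoppedCusum_le hmeas hindep hexp n)) le_rfl
    _ ≤ ∫⁻ ω, oneSidedAlarm h (fun k => s k ω) ∂μ + 1 := by
        rw [add_assoc, add_comm]
        gcongr

theorem ofReal_exp_le_lintegral_oneSidedAlarm (hmeas : ∀ k, Measurable (s k))
    (hindep : iIndepFun s μ) (hexp : ∀ k, ∫⁻ ω, ENNReal.ofReal (Real.exp (r * s k ω)) ∂μ ≤ 1)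
    (hr : 0 ≤ r) (hh : 0 < h) :
    ENNReal.ofReal (Real.exp (r * h)) ≤ ∫⁻ ω, oneSidedAlarm h (fun k => s k ω) ∂μ := by
  have := hindep.isProbabilityMeasure
  set A := fun n => {ω | h ≤ stoppedCusum h (fun k => s k ω) n}
  have hA : MeasurableSet (⋃ n, A n) :=
    .iUnion fun n => measurableSet_le measurable_const (measurable_stoppedCusum_comp hmeas n)
  have hAlarm : ENNReal.ofReal (Real.exp (r * h)) * μ (⋃ n, A n) ≤
      ∫⁻ ω, oneSidedAlarm h (fun k => s k ω) ∂μ :=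
    le_of_tendsto'
      (ENNReal.Tendsto.const_mul
        (tendsto_measure_iUnion_atTop fun m n hmn ω hω => le_stoppedCusum_of_le hmn hω)
        (.inr ENNReal.ofReal_ne_top))
      (ofReal_exp_mul_measure_le_lintegral_oneSidedAlarm hmeas hindep hexp hr hh)
  by_cases hnever : μ (⋃ n, A n)ᶜ = 0
  · rw [prob_compl_eq_zero_iff hA] at hnever
    simpa [hnever] using hAlarm
  · have hT : ∫⁻ ω in (⋃ n, A n)ᶜ, oneSidedAlarm h (fun k => s k ω) ∂μ = ⊤ := by
      rw [setLIntegral_congr_fun hA.compl (g := fun _ => ⊤), setLIntegral_const,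
        ENNReal.top_mul hnever]
      intro ω hω
      exact oneSidedAlarm_eq_top fun n => not_le.1 fun hn => hω (Set.mem_iUnion.2 ⟨n, hn⟩)
    exact le_top.trans (hT ▸ setLIntegral_le_lintegral _ _)

end

theorem one_sided_cusum_arl_lower_bound_general
    {Ω : Type*} [MeasurableSpace Ω] {μ : Measure Ω}
    (s : ℕ → Ω → ℝ) (hmeas : ∀ k, Measurable (s k))
    (hindep : iIndepFun s μ)
    (hident : ∀ k, IdentDistrib (s k) (s 0) μ μ)
    (r : ℝ) (hr : 0 < r) (hroot : ∫ ω, Real.exp (r * s 0 ω) ∂μ = 1)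
    (h : ℝ) (hh : 0 < h) :
    ENNReal.ofReal (Real.exp (r * h)) ≤ ∫⁻ ω, oneSidedAlarm h (fun k => s k ω) ∂μ := by
  have hexp0 : ∫⁻ ω, ENNReal.ofReal (Real.exp (r * s 0 ω)) ∂μ = 1 := by
    rw [← ofReal_integral_eq_lintegral_ofReal (.of_integral_ne_zero (by simp [hroot]))
      (ae_of_all _ fun ω => (Real.exp_pos _).le), hroot, ENNReal.ofReal_one]
  refine ofReal_exp_le_lintegral_oneSidedAlarm hmeas hindep (fun k => ?_) hr.le hh
  rw [← hexp0]
  exact ((hident k).comp (measurable_id.const_mul r).exp.ennreal_ofReal).lintegral_eq.le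

/-- **One-sided average-run-length lower bound** (from the proof of Proposition 1).
If the i.i.d. bounded steps have negative mean drift `E[s_1] < 0` and `r > 0` is the
nonzero root of the cumulant generating function (`E[exp (r s_1)] = 1`), then for any
threshold `h > 0` the one-sided CUSUM alarm time satisfies `E[T_h] ≥ exp (r h)`. -/
theorem one_sided_cusum_arl_lower_bound
    {Ω : Type*} [MeasurableSpace Ω] {μ : Measure Ω} [IsProbabilityMeasure μ]
    (s : ℕ → Ω → ℝ) (hmeas : ∀ k, Measurable (s k))
    (hindep : iIndepFun s μ)
    (hident : ∀ k, IdentDistrib (s k) (s 0) μ μ)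
    (B : ℝ) (hbdd : ∀ k, ∀ᵐ ω ∂μ, |s k ω| ≤ B)
    (hmean : ∫ ω, s 0 ω ∂μ < 0)
    (r : ℝ) (hr : 0 < r) (hroot : ∫ ω, Real.exp (r * s 0 ω) ∂μ = 1)
    (h : ℝ) (hh : 0 < h) :
    ENNReal.ofReal (Real.exp (r * h)) ≤ ∫⁻ ω, oneSidedAlarm h (fun k => s k ω) ∂μ :=
  one_sided_cusum_arl_lower_bound_general s hmeas hindep hident r hr hroot h hh
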